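/- arXiv:2407.02334 — 3 statements merged into one kernel-verified Lean document; each statement's English description precedes it below -/
import Mathlib

section
/- (Pointwise inhomogeneous distortion inequality) Let K ≥ 1, m ≥ n ≥ 2, p ∈ (1,∞), and let ω ∈ Λⁿℝᵐ be a calibration. Let M₀, M₁ : ℝⁿ → ℝᵐ be linear maps such that M₁ − M₀ has rank at most one and ‖M₀‖ⁿ ≤ K·ω(M₀e₁,…,M₀eₙ), where ‖·‖ is the operator norm. Then ‖M₁‖^p ≤ K·‖M₁‖^{p−n}·ω(M₁e₁,…,M₁eₙ) + K·(p + n + |p − n|)·(‖M₁‖ + ‖M₁ − M₀‖)^{p−1}·‖M₁ − M₀‖, where the term ‖M₁‖^{p−n}·ω(M₁e₁,…,M₁eₙ) is interpreted as 0 when M₁ = 0. -/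
noncomputable section
open MeasureTheory Real Set Filter
open scoped ENNReal Topology

/-- `ℝⁿ` with the Euclidean norm. -/
abbrev Euc (n : ℕ) : Type := EuclideanSpace ℝ (Fin n)

/-- The `i`-th standard basis vector of `ℝⁿ`. -/
def stdVec (n : ℕ) (i : Fin n) : Euc n := EuclideanSpace.single i 1

/-- An `n`-covector `ω ∈ Λⁿℝᵐ` is a calibration if its comass equals `1`. -/
def IsCalibration {m n : ℕ} (ω : AlternatingMap ℝ (Euc m) ℝ (Fin n)) : Prop :=
  (∀ v : Fin n → Euc m, Orthonormal ℝ v → ω v ≤ 1) ∧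
  (∃ v : Fin n → Euc m, Orthonormal ℝ v ∧ ω v = 1)

/-- A linear map has rank at most one: its image lies in the span of a single vector. -/
def RankAtMostOne {n m : ℕ} (R : Euc n →L[ℝ] Euc m) : Prop :=
  ∃ u : Euc m, ∀ x : Euc n, ∃ c : ℝ, R x = c • u

/-!
Write `M₀ = M₁ + R` with `R` of rank one. Expanding `ω(M₀e₁,…,M₀eₙ)` multilinearly, every term
containing two columns of `R` vanishes, since those columns are parallel; each of the remaining
`n` terms contains one column of `R` and is bounded by Hadamard's inequality `|ω(v)| ≤ ∏ ‖vᵢ‖`,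
valid for every form of comass at most one. Hence `ω(M₀e) ≤ ω(M₁e) + n‖M₁‖ⁿ⁻¹‖R‖`. Together with
`‖M₁‖ⁿ ≤ ‖M₀‖ⁿ + n‖M₁‖ⁿ⁻¹‖R‖` and the distortion inequality for `M₀` this bounds `‖M₁‖ⁿ`, and
multiplying by `‖M₁‖^(p-n)` gives the claim.
-/

open Function
open scoped RealInnerProductSpace

namespace AlternatingMap

variable {R M N ι : Type*} [CommRing R] [AddCommGroup M] [Module R M] [AddCommGroup N] [Module R N]

theorem map_eq_zero_of_eq_smul_of_eq_smul [DecidableEq ι] (f : M [⋀^ι]→ₗ[R] N) {v : ι → M} {u : M}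
    {i j : ι} (hij : i ≠ j) {a b : R} (hi : v i = a • u) (hj : v j = b • u) : f v = 0 := by
  have hv : v = update (update v i (a • u)) j (b • u) := by
    rw [← hi, ← hj, update_eq_self, update_eq_self]
  rw [hv, map_update_smul, update_comm hij, map_update_smul,
    f.map_eq_zero_of_eq _ (i := i) (j := j) (by simp [update_of_ne hij.symm]) hij, smul_zero,
    smul_zero]

theorem map_add_eq_add_sum_update_of_eq_smul [DecidableEq ι] [Fintype ι] (f : M [⋀^ι]→ₗ[R] N)
    (g r : ι → M) {u : M} (hr : ∀ i, ∃ c : R, r i = c • u) :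
    f (g + r) = f g + ∑ i, f (update g i (r i)) := by
  have hsecond : ∑ s : Finset ι with 2 ≤ s.card, f (s.piecewise r g) = 0 := by
    refine Finset.sum_eq_zero fun s hs => ?_
    obtain ⟨i, hi, j, hj, hij⟩ := Finset.one_lt_card.mp (Finset.mem_filter.mp hs).2
    obtain ⟨a, ha⟩ := hr i
    obtain ⟨b, hb⟩ := hr j
    exact f.map_eq_zero_of_eq_smul_of_eq_smul hij (by rwa [Finset.piecewise_eq_of_mem _ _ _ hi])
      (by rwa [Finset.piecewise_eq_of_mem _ _ _ hj])
  have := f.toMultilinearMap.map_add_eq_map_add_linearDeriv_add g r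
  simp only [MultilinearMap.linearDeriv_apply, coe_multilinearMap] at this
  rw [this, hsecond, add_zero]

end AlternatingMap


def ComassLeOne {E ι : Type*} [NormedAddCommGroup E] [InnerProductSpace ℝ E]
    (ω : E [⋀^ι]→ₗ[ℝ] ℝ) : Prop :=
  ∀ v : ι → E, Orthonormal ℝ v → ω v ≤ 1

namespace ComassLeOne

variable {E : Type*} [NormedAddCommGroup E] [InnerProductSpace ℝ E]

theorem abs_apply_le_one {ι : Type*} [Nonempty ι] {ω : E [⋀^ι]→ₗ[ℝ] ℝ} (hω : ComassLeOne ω)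
    {v : ι → E}
    (hv : Orthonormal ℝ v) : |ω v| ≤ 1 := by
  classical
  let i := Classical.arbitrary ι
  have hneg : Orthonormal ℝ (update v i (-v i)) :=
    hv.orthonormal_of_forall_eq_or_eq_neg fun j => by
      rcases eq_or_ne j i with rfl | hj <;> simp [*]
  have := hω _ hneg
  rw [ω.map_update_neg, update_eq_self] at this
  exact abs_le.mpr ⟨by linarith, hω v hv⟩

theorem abs_apply_le_prod_norm {n : ℕ} [NeZero n] {ω : E [⋀^Fin n]→ₗ[ℝ] ℝ}
    (hω : ComassLeOne ω) (v : Fin n → E) :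
    |ω v| ≤ ∏ i, ‖v i‖ := by
  by_cases hv : LinearIndependent ℝ v
  swap
  · simpa [ω.map_linearDependent v hv] using Finset.prod_nonneg fun i _ => norm_nonneg (v i)
  let W := Submodule.span ℝ (Set.range v)
  have : FiniteDimensional ℝ W := .span_of_finite ℝ (Set.finite_range v)
  let w : Fin n → W := fun i => ⟨v i, Submodule.subset_span ⟨i, rfl⟩⟩
  let b := InnerProductSpace.gramSchmidtOrthonormalBasis (finrank_span_eq_card hv) w
  let ωW := ω.compLinearMap W.subtype
  -- on `W`, `ω` is `ω(b)` times the determinant in the Gram–Schmidt basis `b` built from `v`,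
  -- and that determinant is the product of the diagonal entries `⟪bᵢ, vᵢ⟫` of a triangular matrix
  have hdet : ω v = ωW b * b.toBasis.det w := by
    change ωW w = _
    conv_lhs => rw [ωW.eq_smul_basis_det b.toBasis]
    simp
  have hb : |ωW b| ≤ 1 :=
    hω.abs_apply_le_one (b.orthonormal.comp_linearIsometry W.subtypeₗᵢ)
  rw [hdet, InnerProductSpace.gramSchmidtOrthonormalBasis_det, abs_mul, Finset.abs_prod]
  calc |ωW b| * ∏ i, |⟪b i, w i⟫| ≤ ∏ i, |⟪b i, w i⟫| :=
        mul_le_of_le_one_left (by positivity) hb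
    _ ≤ ∏ i, ‖v i‖ := by
        gcongr with i
        simpa [b.orthonormal.1 i] using abs_real_inner_le_norm (b i) (w i)

theorem apply_add_le_of_eq_smul {n : ℕ} [NeZero n] {ω : E [⋀^Fin n]→ₗ[ℝ] ℝ}
    (hω : ComassLeOne ω) {g r : Fin n → E} {u : E}
    (hr : ∀ i, ∃ c : ℝ, r i = c • u) {A T : ℝ} (hg : ∀ i, ‖g i‖ ≤ A) (hrT : ∀ i, ‖r i‖ ≤ T) :
    ω (g + r) ≤ ω g + n * A ^ (n - 1) * T := by
  classical
  have hA : 0 ≤ A := (norm_nonneg _).trans (hg 0)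
  have hterm (i : Fin n) : ω (update g i (r i)) ≤ A ^ (n - 1) * T := calc
    ω (update g i (r i)) ≤ ∏ j, ‖update g i (r i) j‖ :=
      (le_abs_self _).trans (hω.abs_apply_le_prod_norm _)
    _ = ‖r i‖ * ∏ j ∈ Finset.univ \ {i}, ‖g j‖ := by
      rw [← Finset.prod_update_of_mem (Finset.mem_univ i)]
      congr 1 with j
      rcases eq_or_ne j i with rfl | hj <;> simp [*]
    _ ≤ T * ∏ _j ∈ Finset.univ \ {i}, A :=
      mul_le_mul (hrT i) (Finset.prod_le_prod (fun _ _ => norm_nonneg _) fun j _ => hg j)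
        (by positivity) ((norm_nonneg _).trans (hrT i))
    _ = A ^ (n - 1) * T := by rw [Finset.prod_const, Finset.card_univ_sdiff]; simp [mul_comm]
  rw [ω.map_add_eq_add_sum_update_of_eq_smul g r hr]
  have := Finset.sum_le_sum fun i (_ : i ∈ Finset.univ) => hterm i
  simp only [Finset.sum_const, Finset.card_univ, Fintype.card_fin, nsmul_eq_mul] at this
  linarith

end ComassLeOne

theorem pow_le_pow_add_mul_of_sub_le {a b t : ℝ} (ha : 0 ≤ a) (hb : 0 ≤ b) (ht : 0 ≤ t)
    (hab : a - b ≤ t) (n : ℕ) : a ^ n ≤ b ^ n + n * a ^ (n - 1) * t := by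
  rcases le_total a b with hle | hle
  · have := pow_le_pow_left₀ ha hle n
    have : 0 ≤ n * a ^ (n - 1) * t := by positivity
    linarith
  · have h := (le_abs_self _).trans (abs_pow_sub_pow_le a b n)
    rw [abs_of_nonneg ha, abs_of_nonneg hb, max_eq_left hle, abs_of_nonneg (sub_nonneg.2 hle)] at h
    have : (a - b) * n * a ^ (n - 1) ≤ t * n * a ^ (n - 1) := by gcongr
    linarith

theorem rpow_le_of_pow_le_add {a X C t p : ℝ} {n : ℕ} (ha : 0 ≤ a) (hn : n ≠ 0) (hp₀ : p ≠ 0)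
    (hp₁ : p ≠ 1) (h : a ^ n ≤ X + C * a ^ (n - 1) * t) :
    a ^ p ≤ a ^ (p - n) * X + C * a ^ (p - 1) * t := by
  have hp : a ^ p = a ^ (p - n) * a ^ n := by
    rw [← rpow_natCast, ← rpow_add' ha (by simpa using hp₀), sub_add_cancel]
  have hp' : a ^ (p - n) * a ^ (n - 1) = a ^ (p - 1) := by
    rw [← rpow_natCast, ← rpow_add' ha (by simpa [Nat.cast_sub (Nat.one_le_iff_ne_zero.2 hn),
      sub_eq_zero] using hp₁), Nat.cast_sub (Nat.one_le_iff_ne_zero.2 hn)]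
    ring_nf
  calc a ^ p = a ^ (p - n) * a ^ n := hp
    _ ≤ a ^ (p - n) * (X + C * a ^ (n - 1) * t) := by gcongr
    _ = a ^ (p - n) * X + C * (a ^ (p - n) * a ^ (n - 1)) * t := by ring
    _ = a ^ (p - n) * X + C * a ^ (p - 1) * t := by rw [hp']

theorem norm_apply_stdVec_le {m n : ℕ} (M : Euc n →L[ℝ] Euc m) (i : Fin n) :
    ‖M (stdVec n i)‖ ≤ ‖M‖ := by
  simpa [stdVec] using M.le_opNorm (stdVec n i)

theorem apply_stdVec_le_of_rankAtMostOne {m n : ℕ} [NeZero n]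
    {ω : AlternatingMap ℝ (Euc m) ℝ (Fin n)} (hω : ComassLeOne ω) {M₀ M₁ : Euc n →L[ℝ] Euc m}
    (hrank : RankAtMostOne (M₁ - M₀)) :
    ω (fun i => M₀ (stdVec n i)) ≤
      ω (fun i => M₁ (stdVec n i)) + n * ‖M₁‖ ^ (n - 1) * ‖M₁ - M₀‖ := by
  obtain ⟨u, hu⟩ := hrank
  have hr (i : Fin n) : ∃ c : ℝ, (M₀ - M₁) (stdVec n i) = c • u := by
    obtain ⟨c, hc⟩ := hu (stdVec n i)
    exact ⟨-c, by rw [← neg_sub, neg_apply, hc, neg_smul]⟩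
  have hsplit : (fun i => M₀ (stdVec n i)) =
      (fun i => M₁ (stdVec n i)) + fun i => (M₀ - M₁) (stdVec n i) := by
    ext1 i
    simp
  rw [hsplit]
  exact hω.apply_add_le_of_eq_smul hr (norm_apply_stdVec_le M₁) fun i =>
    (norm_apply_stdVec_le _ i).trans (norm_sub_rev _ _).le

theorem pointwise_inhomogeneous_distortion_general
    (K : ℝ) (hK : 1 ≤ K) (m n : ℕ) (hn : 2 ≤ n)
    (p : ℝ) (hp : 1 < p)
    (ω : AlternatingMap ℝ (Euc m) ℝ (Fin n)) (hω : IsCalibration ω)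
    (M₀ M₁ : Euc n →L[ℝ] Euc m)
    (hrank : RankAtMostOne (M₁ - M₀))
    (hdist : ‖M₀‖ ^ n ≤ K * ω (fun i => M₀ (stdVec n i))) :
    ‖M₁‖ ^ p ≤
      K * ‖M₁‖ ^ (p - n) * ω (fun i => M₁ (stdVec n i)) +
      K * (p + n + |p - n|) * (‖M₁‖ + ‖M₁ - M₀‖) ^ (p - 1) * ‖M₁ - M₀‖ := by
  have : NeZero n := ⟨by omega⟩
  set a := ‖M₁‖
  set t := ‖M₁ - M₀‖
  have hω₀ := apply_stdVec_le_of_rankAtMostOne hω.1 hrank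
  have hpow : a ^ n ≤ ‖M₀‖ ^ n + n * a ^ (n - 1) * t :=
    pow_le_pow_add_mul_of_sub_le (norm_nonneg _) (norm_nonneg _) (norm_nonneg _)
      (norm_sub_norm_le _ _) n
  have hKω : a ^ n ≤ K * ω (fun i => M₁ (stdVec n i)) + (K + 1) * n * a ^ (n - 1) * t := by
    linarith [mul_le_mul_of_nonneg_left hω₀ (zero_le_one.trans hK)]
  -- `p + n + |p - n| = 2 max p n ≥ 2n` and `K + 1 ≤ 2K`
  have hconst : (K + 1) * n ≤ K * (p + n + |p - n|) := by
    nlinarith [neg_abs_le (p - n)]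
  calc a ^ p ≤ a ^ (p - n) * (K * ω (fun i => M₁ (stdVec n i))) +
        (K + 1) * n * a ^ (p - 1) * t :=
      rpow_le_of_pow_le_add (norm_nonneg _) (by omega) (by positivity) hp.ne' hKω
    _ ≤ K * a ^ (p - n) * ω (fun i => M₁ (stdVec n i)) +
        K * (p + n + |p - n|) * (a + t) ^ (p - 1) * t := by
      rw [← mul_assoc, mul_comm (a ^ _) K]
      gcongr _ + ?_ * ?_ * _
      exact rpow_le_rpow (norm_nonneg _) (le_add_of_nonneg_right (norm_nonneg _)) (by linarith)

/-- Pointwise inhomogeneous distortion inequality for a rank-one perturbation. -/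
theorem pointwise_inhomogeneous_distortion
    (K : ℝ) (hK : 1 ≤ K) (m n : ℕ) (hn : 2 ≤ n) (hm : n ≤ m)
    (p : ℝ) (hp : 1 < p)
    (ω : AlternatingMap ℝ (Euc m) ℝ (Fin n)) (hω : IsCalibration ω)
    (M₀ M₁ : Euc n →L[ℝ] Euc m)
    (hrank : RankAtMostOne (M₁ - M₀))
    (hdist : ‖M₀‖ ^ n ≤ K * ω (fun i => M₀ (stdVec n i))) :
    ‖M₁‖ ^ p ≤
      K * ‖M₁‖ ^ (p - n) * ω (fun i => M₁ (stdVec n i)) +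
      K * (p + n + |p - n|) * (‖M₁‖ + ‖M₁ - M₀‖) ^ (p - 1) * ‖M₁ - M₀‖ :=
  pointwise_inhomogeneous_distortion_general K hK m n hn p hp ω hω M₀ M₁ hrank hdist
end
end

section
/- For every real t ∈ [0,1] and every real s > 0, one has |t − t^s| ≤ |1 − s|. -/
/-- For `t ∈ [0,1]` and `s > 0`, one has `|t − t^s| ≤ |1 − s|` (real power). -/
theorem abs_sub_rpow_le_abs_one_sub
    (t s : ℝ) (ht0 : 0 ≤ t) (ht1 : t ≤ 1) (hs : 0 < s) :
    |t - t ^ s| ≤ |1 - s| := by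
  rcases eq_or_lt_of_le ht0 with h0 | h0
  · rw [← h0, Real.zero_rpow hs.ne', sub_zero, abs_zero]
    positivity
  rcases le_total s 1 with hs1 | hs1
  · -- case s ≤ 1 : t ≤ t^s ≤ s*t + (1-s)
    have h1 : t ≤ t ^ s := by
      calc t = t ^ (1 : ℝ) := (Real.rpow_one t).symm
        _ ≤ t ^ s := Real.rpow_le_rpow_of_exponent_ge h0 ht1 hs1
    have h2 : t ^ s * 1 ^ (1 - s) ≤ s * t + (1 - s) * 1 :=
      Real.geom_mean_le_arith_mean2_weighted hs.le (by linarith) ht0 zero_le_one (by ring)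
    rw [Real.one_rpow, mul_one, mul_one] at h2
    rw [abs_of_nonpos (by linarith), abs_of_nonneg (by linarith)]
    nlinarith [mul_nonneg (sub_nonneg.2 hs1) ht0]
  · -- case 1 ≤ s
    have h1 : t ^ s ≤ t := by
      calc t ^ s ≤ t ^ (1 : ℝ) := Real.rpow_le_rpow_of_exponent_ge h0 ht1 hs1
        _ = t := Real.rpow_one t
    have hts : t ^ s = t * t ^ (s - 1) := by
      rw [← Real.rpow_one_add' h0.le (by linarith)]
      ring_nf
    have hexp : 1 + (s - 1) * Real.log t ≤ t ^ (s - 1) := by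
      rw [Real.rpow_def_of_pos h0]
      have := Real.add_one_le_exp (Real.log t * (s - 1))
      linarith [this, mul_comm (Real.log t) (s - 1)]
    have hlog : t * (-Real.log t) ≤ 1 - t := by
      have h := Real.log_le_sub_one_of_pos (x := 1 / t) (by positivity)
      rw [Real.log_div one_ne_zero h0.ne', Real.log_one, zero_sub] at h
      have ht : t * (1 / t) = 1 := by field_simp
      nlinarith
    rw [abs_of_nonneg (by linarith), abs_of_nonpos (by linarith)]
    nlinarith [mul_le_mul_of_nonneg_left hexp ht0,
      mul_le_mul_of_nonneg_left hlog (by linarith : (0:ℝ) ≤ s - 1)]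
end

section
/- Let n ≥ 1 be an integer and let p > 0, A > 0 be real numbers. Let a₁,…,aₙ ∈ [0,A] and let J ∈ ℝ satisfy |J| ≤ a₁⋯aₙ. Then |J·A^{p−n} − J·(a₁⋯aₙ)^{(p−n)/n}| ≤ |(n−p)/n|·A^p, where the term J·(a₁⋯aₙ)^{(p−n)/n} is interpreted as 0 when a₁⋯aₙ = 0 (which forces J = 0). -/
/-!
Write `P = a₁⋯aₙ ≤ Aⁿ`, `x = P / Aⁿ ∈ [0, 1]` and `s = p / n`. Since `|J| ≤ P`, the left-hand side
is at most `P · |A^(p-n) - P^(s-1)| = A^p · |x - x^s|`, and `|x - x^s| ≤ |1 - s|` because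
Bernoulli's inequality places `x^s` between `x` and `1 + s (x - 1)`.
-/

theorem Real.abs_sub_rpow_le_abs_one_sub {x s : ℝ} (hx0 : 0 ≤ x) (hx1 : x ≤ 1) (hs : 0 ≤ s) :
    |x - x ^ s| ≤ |1 - s| := by
  have hx : -1 ≤ x - 1 := by linarith
  rcases le_total s 1 with hs1 | hs1
  · have bernoulli : x ^ s ≤ 1 + s * (x - 1) := by
      simpa using rpow_one_add_le_one_add_mul_self hx hs hs1
    have hxs : x ≤ x ^ s := by
      simpa using Real.rpow_le_rpow_of_exponent_ge' hx0 hx1 hs hs1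
    rw [abs_of_nonpos (by linarith), abs_of_nonneg (by linarith)]
    nlinarith
  · have bernoulli : 1 + s * (x - 1) ≤ x ^ s := by
      simpa using one_add_mul_self_le_rpow_one_add hx hs1
    have hxs : x ^ s ≤ x := by
      simpa using Real.rpow_le_rpow_of_exponent_ge' hx0 hx1 zero_le_one hs1
    rw [abs_of_nonneg (by linarith), abs_of_nonpos (by linarith)]
    nlinarith

theorem Real.mul_rpow_sub_one_sub_rpow_sub_one {P c : ℝ} (hP : 0 < P) (hc : 0 < c) (s : ℝ) :
    P * (c ^ (s - 1) - P ^ (s - 1)) = c ^ s * (P / c - (P / c) ^ s) := by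
  rw [Real.div_rpow hP.le hc.le, Real.rpow_sub_one hc.ne', Real.rpow_sub_one hP.ne']
  field_simp

theorem Real.abs_mul_rpow_sub_one_sub_mul_rpow_sub_one_le {J P c s : ℝ} (hc : 0 < c)
    (hPc : P ≤ c) (hs : 0 ≤ s) (hJ : |J| ≤ P) :
    |J * c ^ (s - 1) - J * P ^ (s - 1)| ≤ |1 - s| * c ^ s := by
  rcases (abs_nonneg J).trans hJ |>.eq_or_lt with hP | hP
  · have hJ0 : J = 0 := abs_nonpos_iff.mp (hP ▸ hJ)
    simp only [hJ0, zero_mul, sub_self, abs_zero]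
    positivity
  calc |J * c ^ (s - 1) - J * P ^ (s - 1)|
      = |J| * |c ^ (s - 1) - P ^ (s - 1)| := by rw [← mul_sub, abs_mul]
    _ ≤ P * |c ^ (s - 1) - P ^ (s - 1)| := by gcongr
    _ = |P * (c ^ (s - 1) - P ^ (s - 1))| := by rw [abs_mul, abs_of_pos hP]
    _ = c ^ s * |P / c - (P / c) ^ s| := by
      rw [Real.mul_rpow_sub_one_sub_rpow_sub_one hP hc, abs_mul,
        abs_of_pos (Real.rpow_pos_of_pos hc s)]
    _ ≤ c ^ s * |1 - s| := mul_le_mul_of_nonneg_left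
      (Real.abs_sub_rpow_le_abs_one_sub (by positivity) (div_le_one_of_le₀ hPc hc.le) hs)
      (by positivity)
    _ = |1 - s| * c ^ s := mul_comm _ _

/-- If `a₁,…,aₙ ∈ [0,A]` and `|J| ≤ a₁⋯aₙ`, then
`|J·A^{p−n} − J·(a₁⋯aₙ)^{(p−n)/n}| ≤ |(n−p)/n|·A^p` (real powers). -/
theorem abs_mul_rpow_sub_mul_rpow_le
    (n : ℕ) (hn : 1 ≤ n) (p A : ℝ) (hp : 0 < p) (hA : 0 < A)
    (a : Fin n → ℝ) (ha0 : ∀ i, 0 ≤ a i) (haA : ∀ i, a i ≤ A)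
    (J : ℝ) (hJ : |J| ≤ ∏ i : Fin n, a i) :
    |J * A ^ (p - n) - J * (∏ i : Fin n, a i) ^ ((p - n) / n)| ≤
      |((n : ℝ) - p) / n| * A ^ p := by
  have hn0 : (n : ℝ) ≠ 0 := Nat.cast_ne_zero.mpr (by omega)
  have hprod : ∏ i : Fin n, a i ≤ A ^ n :=
    (Finset.prod_le_prod (fun i _ => ha0 i) fun i _ => haA i).trans_eq (by simp)
  have hexp : (p - n) / n = p / n - 1 := by field_simp
  have hpow (t : ℝ) : A ^ (n * t) = (A ^ n) ^ t := by
    rw [Real.rpow_mul hA.le, Real.rpow_natCast]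
  have key := Real.abs_mul_rpow_sub_one_sub_mul_rpow_sub_one_le (pow_pos hA n) hprod
    (div_nonneg hp.le (Nat.cast_nonneg n)) hJ
  rwa [← hpow, ← hpow, mul_sub, mul_div_cancel₀ _ hn0, mul_one, ← hexp,
    one_sub_div hn0] at key
end
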